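/- (Dyadic Kolmogorov-type Hölder extension, deterministic) Let r ≥ 1, integers c_1,…,c_r ≥ 2, and let Z^r_∞(c) be the union over m of the lattices Z^r_m(c) = {(z¹c_1^{-m},…,z^r c_r^{-m}) : 0 ≤ z^i ≤ c_i^m}. Let u : Z^r_∞(c) → R, α > 0, and n ≥ 0 an integer. Suppose for any m ≥ n, any i ∈ {1,…,r}, and any z₁, z₂ ∈ Z^r_m(c) with |z₁^i - z₂^i| ≤ c_i^{-m} and z₁^j = z₂^j for j ≠ i, one has |u(z₁) - u(z₂)| ≤ 2^{-mα}. Then there is a constant N = N(r, c_1,…,c_r, α) such that for all z₁, z₂ ∈ Z^r_∞(c) with |z₁^i - z₂^i| ≤ c_i^{-n-1} for all i: |u(z₁) - u(z₂)| ≤ N · max_i |z₁^i - z₂^i|^{α_i}, where α_i = α ln 2 / ln c_i. Consequently u extends continuously to [0,1]^r and the same estimate holds on [0,1]^r under the same constraint on |z₁^i - z₂^i|. -/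

import Mathlib

/-!
Write `ρ = 2^{-α}`. Walking from one point of the level-`m` lattice to another one mesh step at a
time, one coordinate after the other, `u` changes by at most `(∑ᵢ |z₁ⁱ - z₂ⁱ| c_iᵐ) ρᵐ`. Hence
the values of `u` at the roundings of `z` down to the level-`m` lattices have geometrically
decaying increments; their limit `v` extends `u`, and for `k ≥ n` the oscillation of `v` on a box
of sides `c_i^{-k}` is `O(ρᵏ)`. For `z₁ ≠ z₂` take the largest `k` with
`|z₁ⁱ - z₂ⁱ| ≤ c_i^{-k}` for all `i`: some coordinate then has `|z₁ⁱ - z₂ⁱ| > c_i^{-(k+1)}`, and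
`(c_i^{-(k+1)})^{α_i} = ρ^{k+1}` turns `O(ρᵏ)` into the Hölder bound. The same oscillation bound
gives continuity of `v`.
-/

open MeasureTheory

/-- The lattice `Z^r_m(c)` in `[0,1]^r`, with coordinate `i` running over multiples of
`c_i^{-m}`. -/
def lattice (r : ℕ) (c : Fin r → ℕ) (m : ℕ) : Set (Fin r → ℝ) :=
  {z | ∀ i, ∃ a : ℕ, a ≤ c i ^ m ∧ z i = (a : ℝ) / (c i : ℝ) ^ m}

/-- `Z^r_∞(c) = ⋃_m Z^r_m(c)`. -/
def latticeInf (r : ℕ) (c : Fin r → ℕ) : Set (Fin r → ℝ) :=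
  ⋃ m : ℕ, lattice r c m

open Filter Topology Set

variable {r : ℕ} {c : Fin r → ℕ}

theorem lattice_mono (hc : ∀ i, 0 < c i) {m m' : ℕ} (h : m ≤ m') :
    lattice r c m ⊆ lattice r c m' := by
  obtain ⟨d, rfl⟩ := Nat.exists_eq_add_of_le h
  intro z hz i
  obtain ⟨a, ha, hza⟩ := hz i
  have hci : (c i : ℝ) ≠ 0 := by have := hc i; positivity
  refine ⟨a * c i ^ d, ?_, ?_⟩
  · rw [pow_add]
    exact Nat.mul_le_mul_right _ ha
  · rw [hza, pow_add]
    push_cast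
    field_simp

theorem lattice_subset_Icc (hc : ∀ i, 0 < c i) {m : ℕ} : lattice r c m ⊆ Icc 0 1 := by
  intro z hz
  refine ⟨fun i => ?_, fun i => ?_⟩ <;> obtain ⟨a, ha, hza⟩ := hz i
  · rw [Pi.zero_apply, hza]
    positivity
  · have hcm : (0 : ℝ) < (c i : ℝ) ^ m := by have := hc i; positivity
    rw [Pi.one_apply, hza, div_le_one hcm]
    exact_mod_cast ha

theorem latticeInf_subset_Icc (hc : ∀ i, 0 < c i) : latticeInf r c ⊆ Icc 0 1 :=
  iUnion_subset fun _ => lattice_subset_Icc hc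

theorem update_mem_lattice {m : ℕ} {z : Fin r → ℝ} (hz : z ∈ lattice r c m) {i : Fin r}
    {a : ℕ} (ha : a ≤ c i ^ m) :
    Function.update z i ((a : ℝ) / (c i : ℝ) ^ m) ∈ lattice r c m := by
  intro j
  rcases eq_or_ne j i with rfl | hji
  · exact ⟨a, ha, by simp⟩
  · simpa [Function.update_of_ne hji] using hz j

noncomputable def roundDown (c : Fin r → ℕ) (m : ℕ) (z : Fin r → ℝ) : Fin r → ℝ :=
  fun i => ⌊z i * (c i : ℝ) ^ m⌋₊ / (c i : ℝ) ^ m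

theorem roundDown_mem_lattice (hc : ∀ i, 0 < c i) {m : ℕ} {z : Fin r → ℝ}
    (hz : z ∈ Icc 0 1) : roundDown c m z ∈ lattice r c m := by
  intro i
  refine ⟨⌊z i * (c i : ℝ) ^ m⌋₊, ?_, rfl⟩
  have hcm : (0 : ℝ) < (c i : ℝ) ^ m := by have := hc i; positivity
  have hz1 : z i ≤ 1 := hz.2 i
  apply Nat.floor_le_of_le
  push_cast
  nlinarith

theorem roundDown_le (hc : ∀ i, 0 < c i) (m : ℕ) {z : Fin r → ℝ} (hz : 0 ≤ z) (i : Fin r) :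
    roundDown c m z i ≤ z i := by
  have hcm : (0 : ℝ) < (c i : ℝ) ^ m := by have := hc i; positivity
  rw [roundDown, div_le_iff₀ hcm]
  exact Nat.floor_le (mul_nonneg (hz i) hcm.le)

theorem sub_inv_lt_roundDown (hc : ∀ i, 0 < c i) (m : ℕ) (z : Fin r → ℝ) (i : Fin r) :
    z i - ((c i : ℝ) ^ m)⁻¹ < roundDown c m z i := by
  have hcm : (0 : ℝ) < (c i : ℝ) ^ m := by have := hc i; positivity
  rw [roundDown, lt_div_iff₀ hcm, sub_mul, inv_mul_cancel₀ hcm.ne']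
  linarith [Nat.lt_floor_add_one (z i * (c i : ℝ) ^ m)]

theorem roundDown_eq_self (hc : ∀ i, 0 < c i) {m : ℕ} {z : Fin r → ℝ}
    (hz : z ∈ lattice r c m) : roundDown c m z = z := by
  funext i
  obtain ⟨a, -, hza⟩ := hz i
  have hcm : (0 : ℝ) < (c i : ℝ) ^ m := by have := hc i; positivity
  rw [roundDown, hza, div_mul_cancel₀ _ hcm.ne', Nat.floor_natCast]

theorem abs_roundDown_succ_sub_le (hc : ∀ i, 0 < c i) (m : ℕ) {z : Fin r → ℝ} (hz : 0 ≤ z)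
    (i : Fin r) : |roundDown c (m + 1) z i - roundDown c m z i| ≤ ((c i : ℝ) ^ m)⁻¹ := by
  have hle : ((c i : ℝ) ^ (m + 1))⁻¹ ≤ ((c i : ℝ) ^ m)⁻¹ :=
    inv_anti₀ (by have := hc i; positivity)
      (pow_le_pow_right₀ (by exact_mod_cast hc i) m.le_succ)
  have := sub_inv_lt_roundDown hc (m + 1) z i
  have := sub_inv_lt_roundDown hc m z i
  have := roundDown_le hc (m + 1) hz i
  have := roundDown_le hc m hz i
  rw [abs_le]
  constructor <;> linarith

theorem abs_roundDown_sub_roundDown_le (hc : ∀ i, 0 < c i) (m : ℕ) {z₁ z₂ : Fin r → ℝ}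
    (hz₁ : 0 ≤ z₁) (hz₂ : 0 ≤ z₂) (i : Fin r) :
    |roundDown c m z₁ i - roundDown c m z₂ i| ≤ |z₁ i - z₂ i| + ((c i : ℝ) ^ m)⁻¹ := by
  have := sub_inv_lt_roundDown hc m z₁ i
  have := sub_inv_lt_roundDown hc m z₂ i
  have := roundDown_le hc m hz₁ i
  have := roundDown_le hc m hz₂ i
  have := le_abs_self (z₁ i - z₂ i)
  have := neg_abs_le (z₁ i - z₂ i)
  rw [abs_le]
  constructor <;> linarith

theorem dist_le_abs_sub_mul_of_dist_succ_le {X : Type*} [PseudoMetricSpace X] {f : ℕ → X}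
    {M : ℕ} {δ : ℝ} (hf : ∀ k, k < M → dist (f k) (f (k + 1)) ≤ δ) {a b : ℕ} (ha : a ≤ M)
    (hb : b ≤ M) : dist (f a) (f b) ≤ |(a : ℝ) - b| * δ := by
  wlog hab : a ≤ b generalizing a b
  · rw [dist_comm, abs_sub_comm]
    exact this hb ha (le_of_not_ge hab)
  have := dist_le_Ico_sum_of_dist_le (f := f) (d := fun _ => δ) hab fun _ hk => hf _ (by omega)
  rw [Finset.sum_const, Nat.card_Ico, nsmul_eq_mul, Nat.cast_sub hab] at this
  rwa [abs_sub_comm, abs_of_nonneg (sub_nonneg.2 (Nat.cast_le.2 hab))]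

def LatticeStepBound (c : Fin r → ℕ) (u : (Fin r → ℝ) → ℝ) (δ : ℕ → ℝ) (n : ℕ) : Prop :=
  ∀ m, n ≤ m → ∀ i, ∀ z₁ ∈ lattice r c m, ∀ z₂ ∈ lattice r c m,
    |z₁ i - z₂ i| ≤ ((c i : ℝ) ^ m)⁻¹ → (∀ j, j ≠ i → z₁ j = z₂ j) → |u z₁ - u z₂| ≤ δ m

section StepBound

variable {u : (Fin r → ℝ) → ℝ} {δ : ℕ → ℝ} {n m : ℕ}

theorem LatticeStepBound.abs_sub_le_of_eq_of_ne (hc : ∀ i, 0 < c i)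
    (hu : LatticeStepBound c u δ n) (hm : n ≤ m) {z₁ z₂ : Fin r → ℝ}
    (hz₁ : z₁ ∈ lattice r c m) (hz₂ : z₂ ∈ lattice r c m) {i : Fin r}
    (hij : ∀ j, j ≠ i → z₁ j = z₂ j) :
    |u z₁ - u z₂| ≤ |z₁ i - z₂ i| * (c i : ℝ) ^ m * δ m := by
  obtain ⟨a, ha, hza⟩ := hz₁ i
  obtain ⟨b, hb, hzb⟩ := hz₂ i
  have hcm : (0 : ℝ) < (c i : ℝ) ^ m := by have := hc i; positivity
  set f : ℕ → ℝ := fun k => u (Function.update z₁ i (k / (c i : ℝ) ^ m))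
  have hstep : ∀ k, k < c i ^ m → dist (f k) (f (k + 1)) ≤ δ m := fun k hk => by
    rw [Real.dist_eq]
    refine hu m hm i _ (update_mem_lattice hz₁ hk.le) _
      (update_mem_lattice hz₁ (by exact_mod_cast hk)) ?_ fun j hj => ?_
    · rw [Function.update_self, Function.update_self, ← sub_div, abs_div, abs_of_pos hcm]
      push_cast
      simp
    · rw [Function.update_of_ne hj, Function.update_of_ne hj]
  have hfa : f a = u z₁ := by simp only [f, ← hza, Function.update_eq_self]
  have hfb : f b = u z₂ := by
    simp only [f]
    congr 1
    funext j
    rcases eq_or_ne j i with rfl | hj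
    · rw [Function.update_self, hzb]
    · rw [Function.update_of_ne hj, hij j hj]
  have hab : |(a : ℝ) - b| = |z₁ i - z₂ i| * (c i : ℝ) ^ m := by
    rw [hza, hzb, ← sub_div, abs_div, abs_of_pos hcm, div_mul_cancel₀ _ hcm.ne']
  rw [← hfa, ← hfb, ← hab, ← Real.dist_eq]
  exact dist_le_abs_sub_mul_of_dist_succ_le hstep ha hb

theorem LatticeStepBound.abs_sub_le_sum (hc : ∀ i, 0 < c i) (hu : LatticeStepBound c u δ n)
    (hm : n ≤ m) {w₁ w₂ : Fin r → ℝ} (hw₁ : w₁ ∈ lattice r c m) (hw₂ : w₂ ∈ lattice r c m) :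
    |u w₁ - u w₂| ≤ (∑ i, |w₁ i - w₂ i| * (c i : ℝ) ^ m) * δ m := by
  classical
  have hmem : ∀ s : Finset (Fin r), s.piecewise w₂ w₁ ∈ lattice r c m := fun s i => by
    by_cases h : i ∈ s
    · simpa [Finset.piecewise_eq_of_mem _ _ _ h] using hw₂ i
    · simpa [Finset.piecewise_eq_of_notMem _ _ _ h] using hw₁ i
  have key : ∀ s : Finset (Fin r), |u w₁ - u (s.piecewise w₂ w₁)| ≤
      (∑ i ∈ s, |w₁ i - w₂ i| * (c i : ℝ) ^ m) * δ m := by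
    intro s
    induction s using Finset.induction_on with
    | empty => simp
    | insert i s hi ih =>
      have hstep := hu.abs_sub_le_of_eq_of_ne hc hm (hmem s) (hmem (insert i s)) (i := i)
        fun j hj => by rw [Finset.piecewise_insert, Function.update_of_ne hj]
      rw [Finset.piecewise_eq_of_notMem _ _ _ hi, Finset.piecewise_insert,
        Function.update_self] at hstep
      rw [Finset.sum_insert hi, add_mul, Finset.piecewise_insert]
      linarith [abs_sub_le (u w₁) (u (s.piecewise w₂ w₁))
        (u (Function.update (s.piecewise w₂ w₁) i (w₂ i)))]
  simpa using key Finset.univ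

theorem LatticeStepBound.abs_apply_roundDown_succ_sub_le (hc : ∀ i, 0 < c i)
    (hu : LatticeStepBound c u δ n) (hδ : 0 ≤ δ (m + 1)) (hm : n ≤ m) {z : Fin r → ℝ}
    (hz : z ∈ Icc 0 1) :
    |u (roundDown c (m + 1) z) - u (roundDown c m z)| ≤ (∑ i, (c i : ℝ)) * δ (m + 1) := by
  refine (hu.abs_sub_le_sum hc (by omega) (roundDown_mem_lattice hc hz)
    (lattice_mono hc m.le_succ (roundDown_mem_lattice hc hz))).trans ?_
  gcongr with i
  have hcm : (0 : ℝ) < (c i : ℝ) ^ m := by have := hc i; positivity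
  calc |roundDown c (m + 1) z i - roundDown c m z i| * (c i : ℝ) ^ (m + 1)
      ≤ ((c i : ℝ) ^ m)⁻¹ * (c i : ℝ) ^ (m + 1) := by
        gcongr
        exact abs_roundDown_succ_sub_le hc m hz.1 i
    _ = c i := by rw [pow_succ]; field_simp

theorem LatticeStepBound.abs_apply_roundDown_sub_le (hc : ∀ i, 0 < c i)
    (hu : LatticeStepBound c u δ n) (hδ : 0 ≤ δ m) (hm : n ≤ m) {z₁ z₂ : Fin r → ℝ}
    (hz₁ : z₁ ∈ Icc 0 1) (hz₂ : z₂ ∈ Icc 0 1)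
    (hd : ∀ i, |z₁ i - z₂ i| ≤ ((c i : ℝ) ^ m)⁻¹) :
    |u (roundDown c m z₁) - u (roundDown c m z₂)| ≤ 2 * r * δ m := by
  refine (hu.abs_sub_le_sum hc hm (roundDown_mem_lattice hc hz₁)
    (roundDown_mem_lattice hc hz₂)).trans ?_
  have hsum : ∑ i, |roundDown c m z₁ i - roundDown c m z₂ i| * (c i : ℝ) ^ m ≤
      ∑ _i : Fin r, (2 : ℝ) := by
    gcongr with i
    have hcm : (0 : ℝ) < (c i : ℝ) ^ m := by have := hc i; positivity
    calc |roundDown c m z₁ i - roundDown c m z₂ i| * (c i : ℝ) ^ m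
        ≤ (((c i : ℝ) ^ m)⁻¹ + ((c i : ℝ) ^ m)⁻¹) * (c i : ℝ) ^ m := by
          gcongr
          exact (abs_roundDown_sub_roundDown_le hc m hz₁.1 hz₂.1 i).trans (by gcongr; exact hd i)
      _ = 2 := by field_simp; ring
  rw [Finset.sum_const, Finset.card_univ, Fintype.card_fin, nsmul_eq_mul] at hsum
  exact (mul_le_mul_of_nonneg_right hsum hδ).trans_eq (by ring)

end StepBound

noncomputable def latticeExtension (c : Fin r → ℕ) (u : (Fin r → ℝ) → ℝ) (z : Fin r → ℝ) : ℝ :=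
  limUnder atTop fun m => u (roundDown c m z)

theorem latticeExtension_eq_of_mem (hc : ∀ i, 0 < c i) (u : (Fin r → ℝ) → ℝ)
    {z : Fin r → ℝ} (hz : z ∈ latticeInf r c) : latticeExtension c u z = u z := by
  obtain ⟨m₀, hm₀⟩ := mem_iUnion.1 hz
  refine (tendsto_const_nhds.congr' ?_).limUnder_eq
  filter_upwards [eventually_ge_atTop m₀] with m hm
  rw [roundDown_eq_self hc (lattice_mono hc hm hm₀)]

section Extension

variable {u : (Fin r → ℝ) → ℝ} {ρ : ℝ} {n : ℕ} {z : Fin r → ℝ}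

theorem LatticeStepBound.dist_roundDown_add_succ_le (hc : ∀ i, 0 < c i) (hρ : 0 ≤ ρ)
    (hu : LatticeStepBound c u (ρ ^ ·) n) (hz : z ∈ Icc 0 1) (j : ℕ) :
    dist (u (roundDown c (j + n) z)) (u (roundDown c (j + 1 + n) z)) ≤
      (∑ i, (c i : ℝ)) * ρ ^ (n + 1) * ρ ^ j := by
  rw [Real.dist_eq, abs_sub_comm, mul_assoc, ← pow_add, show n + 1 + j = j + n + 1 by ring,
    show j + 1 + n = j + n + 1 by ring]
  exact hu.abs_apply_roundDown_succ_sub_le hc (by positivity) (by omega) hz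

theorem LatticeStepBound.tendsto_latticeExtension (hc : ∀ i, 0 < c i) (hρ : 0 ≤ ρ)
    (hρ1 : ρ < 1) (hu : LatticeStepBound c u (ρ ^ ·) n) (hz : z ∈ Icc 0 1) :
    Tendsto (fun m => u (roundDown c m z)) atTop (𝓝 (latticeExtension c u z)) :=
  ((cauchySeq_shift n).1 (cauchySeq_of_le_geometric ρ _ hρ1
    (hu.dist_roundDown_add_succ_le hc hρ hz))).tendsto_limUnder

theorem LatticeStepBound.abs_roundDown_sub_latticeExtension_le (hc : ∀ i, 0 < c i)
    (hρ : 0 ≤ ρ) (hρ1 : ρ < 1) (hu : LatticeStepBound c u (ρ ^ ·) n) (hz : z ∈ Icc 0 1)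
    {k : ℕ} (hk : n ≤ k) :
    |u (roundDown c k z) - latticeExtension c u z| ≤ (∑ i, (c i : ℝ)) * ρ ^ (k + 1) / (1 - ρ) := by
  obtain ⟨j, rfl⟩ := Nat.exists_eq_add_of_le' hk
  have := dist_le_of_le_geometric_of_tendsto (f := fun j => u (roundDown c (j + n) z)) ρ _ hρ1
    (hu.dist_roundDown_add_succ_le hc hρ hz)
    ((tendsto_add_atTop_iff_nat n).2 (hu.tendsto_latticeExtension hc hρ hρ1 hz)) j
  rwa [Real.dist_eq, mul_assoc, ← pow_add, show n + 1 + j = j + n + 1 by ring] at this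

theorem LatticeStepBound.abs_latticeExtension_sub_le (hc : ∀ i, 0 < c i) (hρ : 0 ≤ ρ)
    (hρ1 : ρ < 1) (hu : LatticeStepBound c u (ρ ^ ·) n) {k : ℕ} (hk : n ≤ k)
    {z₁ z₂ : Fin r → ℝ} (hz₁ : z₁ ∈ Icc 0 1) (hz₂ : z₂ ∈ Icc 0 1)
    (hd : ∀ i, |z₁ i - z₂ i| ≤ ((c i : ℝ) ^ k)⁻¹) :
    |latticeExtension c u z₁ - latticeExtension c u z₂| ≤
      (2 * (∑ i, (c i : ℝ)) * ρ / (1 - ρ) + 2 * r) * ρ ^ k := by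
  have h₁ := hu.abs_roundDown_sub_latticeExtension_le hc hρ hρ1 hz₁ hk
  have h₂ := hu.abs_roundDown_sub_latticeExtension_le hc hρ hρ1 hz₂ hk
  have h₁₂ := hu.abs_apply_roundDown_sub_le hc (by positivity) hk hz₁ hz₂ hd
  rw [abs_sub_comm] at h₁
  have h₁₃ := abs_sub_le (latticeExtension c u z₁) (u (roundDown c k z₁)) (latticeExtension c u z₂)
  have h₂₃ := abs_sub_le (u (roundDown c k z₁)) (u (roundDown c k z₂)) (latticeExtension c u z₂)
  calc |latticeExtension c u z₁ - latticeExtension c u z₂|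
      ≤ (∑ i, (c i : ℝ)) * ρ ^ (k + 1) / (1 - ρ) + 2 * r * ρ ^ k +
          (∑ i, (c i : ℝ)) * ρ ^ (k + 1) / (1 - ρ) := by linarith
    _ = (2 * (∑ i, (c i : ℝ)) * ρ / (1 - ρ) + 2 * r) * ρ ^ k := by ring

end Extension

section Scale

variable {g : (Fin r → ℝ) → ℝ} {ρ C : ℝ} {n : ℕ}

theorem abs_sub_le_mul_iSup_rpow_of_scale (hc : ∀ i, 1 < (c i : ℝ)) (hρ : 0 < ρ) (hC : 0 ≤ C)
    {a : Fin r → ℝ} (ha : ∀ i, 0 ≤ a i) (hρa : ∀ i k, (((c i : ℝ) ^ k)⁻¹) ^ a i = ρ ^ k)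
    {z₁ z₂ : Fin r → ℝ}
    (hscale : ∀ k, n ≤ k → (∀ i, |z₁ i - z₂ i| ≤ ((c i : ℝ) ^ k)⁻¹) →
      |g z₁ - g z₂| ≤ C * ρ ^ k)
    (hd : ∀ i, |z₁ i - z₂ i| ≤ ((c i : ℝ) ^ n)⁻¹) :
    |g z₁ - g z₂| ≤ C / ρ * ⨆ i, |z₁ i - z₂ i| ^ a i := by
  rcases eq_or_ne z₁ z₂ with rfl | hne
  · rw [sub_self, abs_zero]
    exact mul_nonneg (div_nonneg hC hρ.le)
      (Real.iSup_nonneg fun i => Real.rpow_nonneg (abs_nonneg _) _)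
  obtain ⟨i₀, hi₀⟩ := Function.ne_iff.1 hne
  have hex : ∃ k, n ≤ k ∧ ¬ ∀ i, |z₁ i - z₂ i| ≤ ((c i : ℝ) ^ k)⁻¹ := by
    have hpos : 0 < |z₁ i₀ - z₂ i₀| := abs_pos.2 (sub_ne_zero.2 hi₀)
    have hlim := tendsto_inv_atTop_zero.comp (tendsto_pow_atTop_atTop_of_one_lt (hc i₀))
    obtain ⟨k, hkn, hk⟩ :=
      ((eventually_ge_atTop n).and (hlim.eventually (gt_mem_nhds hpos))).exists
    exact ⟨k, hkn, fun h => (h i₀).not_gt hk⟩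
  classical
  -- `k + 1` is the first scale `≥ n` that no longer contains both points
  obtain ⟨hKn, hKP⟩ := Nat.find_spec hex
  have hnK : n < Nat.find hex := lt_of_le_of_ne hKn fun h => hKP (h ▸ hd)
  obtain ⟨k, hk⟩ : ∃ k, Nat.find hex = k + 1 := ⟨Nat.find hex - 1, by omega⟩
  have hPk : ∀ i, |z₁ i - z₂ i| ≤ ((c i : ℝ) ^ k)⁻¹ :=
    not_and_not_right.1 (Nat.find_min hex (show k < Nat.find hex by omega)) (by omega)
  rw [hk] at hKP
  obtain ⟨i, hi⟩ := not_forall.1 hKP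
  have hρi : ρ ^ (k + 1) ≤ ⨆ i, |z₁ i - z₂ i| ^ a i := by
    rw [← hρa i]
    exact (Real.rpow_le_rpow (by positivity) (le_of_not_ge hi) (ha i)).trans
      (le_ciSup (f := fun i => |z₁ i - z₂ i| ^ a i) (Finite.bddAbove_range _) i)
  calc |g z₁ - g z₂| ≤ C * ρ ^ k := hscale k (by omega) hPk
    _ = C / ρ * ρ ^ (k + 1) := by field_simp; ring
    _ ≤ C / ρ * ⨆ i, |z₁ i - z₂ i| ^ a i := by gcongr

theorem continuousOn_of_scale (hc : ∀ i, 0 < c i) (hρ : 0 ≤ ρ) (hρ1 : ρ < 1)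
    {s : Set (Fin r → ℝ)}
    (hscale : ∀ k, n ≤ k → ∀ z₁ ∈ s, ∀ z₂ ∈ s, (∀ i, |z₁ i - z₂ i| ≤ ((c i : ℝ) ^ k)⁻¹) →
      |g z₁ - g z₂| ≤ C * ρ ^ k) :
    ContinuousOn g s := by
  intro z₀ hz₀
  rw [ContinuousWithinAt, Metric.tendsto_nhds]
  intro ε hε
  have hlim : Tendsto (fun k => C * ρ ^ k) atTop (𝓝 0) := by
    simpa using (tendsto_pow_atTop_nhds_zero_of_lt_one hρ hρ1).const_mul C
  obtain ⟨k, hkn, hk⟩ := ((eventually_ge_atTop n).and (hlim.eventually (gt_mem_nhds hε))).exists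
  have hnear : ∀ᶠ z in 𝓝 z₀, ∀ i, |z i - z₀ i| ≤ ((c i : ℝ) ^ k)⁻¹ :=
    eventually_all.2 fun i => ((continuous_apply i).tendsto z₀).eventually
      (Metric.closedBall_mem_nhds _ (by have := hc i; positivity))
  filter_upwards [self_mem_nhdsWithin, nhdsWithin_le_nhds hnear] with z hz hzk
  rw [Real.dist_eq]
  exact (hscale k hkn z hz z₀ hz₀ hzk).trans_lt hk

end Scale

theorem inv_pow_rpow_log_div_log {b : ℝ} (hb : 1 < b) (α : ℝ) (k : ℕ) :
    ((b ^ k)⁻¹) ^ (α * Real.log 2 / Real.log b) = ((2 : ℝ) ^ (-α)) ^ k := by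
  have hlog : Real.log b ≠ 0 := (Real.log_pos hb).ne'
  rw [Real.rpow_def_of_pos (by positivity), ← Real.rpow_natCast (2 ^ (-α)),
    ← Real.rpow_mul zero_le_two, Real.rpow_def_of_pos two_pos, Real.log_inv, Real.log_pow]
  congr 1
  field_simp

theorem stmt_15_general (r : ℕ) (c : Fin r → ℕ) (hc : ∀ i, 2 ≤ c i)
    (α : ℝ) (hα : 0 < α) :
    ∃ N : ℝ, ∀ (u : (Fin r → ℝ) → ℝ) (n : ℕ),
      (∀ m : ℕ, n ≤ m → ∀ i : Fin r,
        ∀ z₁ ∈ lattice r c m, ∀ z₂ ∈ lattice r c m,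
          |z₁ i - z₂ i| ≤ ((c i : ℝ) ^ m)⁻¹ → (∀ j, j ≠ i → z₁ j = z₂ j) →
          |u z₁ - u z₂| ≤ (2 : ℝ) ^ (-(m : ℝ) * α)) →
      (∀ z₁ ∈ latticeInf r c, ∀ z₂ ∈ latticeInf r c,
        (∀ i, |z₁ i - z₂ i| ≤ ((c i : ℝ) ^ (n + 1))⁻¹) →
        |u z₁ - u z₂| ≤
          N * ⨆ i : Fin r, |z₁ i - z₂ i| ^ (α * Real.log 2 / Real.log (c i))) ∧
      ∃ v : (Fin r → ℝ) → ℝ,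
        ContinuousOn v (Set.univ.pi fun _ : Fin r => Set.Icc (0 : ℝ) 1) ∧
        (∀ z ∈ latticeInf r c, v z = u z) ∧
        ∀ z₁ ∈ Set.univ.pi fun _ : Fin r => Set.Icc (0 : ℝ) 1,
        ∀ z₂ ∈ Set.univ.pi fun _ : Fin r => Set.Icc (0 : ℝ) 1,
          (∀ i, |z₁ i - z₂ i| ≤ ((c i : ℝ) ^ (n + 1))⁻¹) →
          |v z₁ - v z₂| ≤
            N * ⨆ i : Fin r, |z₁ i - z₂ i| ^ (α * Real.log 2 / Real.log (c i)) := by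
  set ρ : ℝ := 2 ^ (-α)
  have hρ : 0 < ρ := by positivity
  have hρ1 : ρ < 1 := Real.rpow_lt_one_of_one_lt_of_neg one_lt_two (neg_neg_of_pos hα)
  have hc₀ : ∀ i, 0 < c i := fun i => by have := hc i; omega
  have hc₁ : ∀ i, 1 < (c i : ℝ) := fun i => by exact_mod_cast hc i
  set C : ℝ := 2 * (∑ i, (c i : ℝ)) * ρ / (1 - ρ) + 2 * r
  have hC : 0 ≤ C := by have := sub_pos.2 hρ1; positivity
  refine ⟨C / ρ, fun u n hu => ?_⟩
  have hδ : (fun m : ℕ => (2 : ℝ) ^ (-(m : ℝ) * α)) = (ρ ^ ·) := funext fun m => by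
    rw [← Real.rpow_natCast, ← Real.rpow_mul zero_le_two, neg_mul_comm, mul_comm]
  have hstep : LatticeStepBound c u (ρ ^ ·) n := hδ ▸ hu
  have hscale := fun k (hk : n ≤ k) z₁ (hz₁ : z₁ ∈ Icc (0 : Fin r → ℝ) 1) z₂
      (hz₂ : z₂ ∈ Icc (0 : Fin r → ℝ) 1) =>
    hstep.abs_latticeExtension_sub_le hc₀ hρ.le hρ1 hk hz₁ hz₂
  have hholder : ∀ z₁ ∈ Icc 0 1, ∀ z₂ ∈ Icc 0 1, (∀ i, |z₁ i - z₂ i| ≤ ((c i : ℝ) ^ (n + 1))⁻¹) →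
      |latticeExtension c u z₁ - latticeExtension c u z₂| ≤
        C / ρ * ⨆ i : Fin r, |z₁ i - z₂ i| ^ (α * Real.log 2 / Real.log (c i)) :=
    fun z₁ hz₁ z₂ hz₂ hd => abs_sub_le_mul_iSup_rpow_of_scale hc₁ hρ hC
      (fun i => div_nonneg (mul_nonneg hα.le (Real.log_nonneg one_le_two))
        (Real.log_nonneg (hc₁ i).le))
      (fun i k => inv_pow_rpow_log_div_log (hc₁ i) α k)
      (fun k hk => hscale k (by omega) z₁ hz₁ z₂ hz₂) hd
  rw [pi_univ_Icc]
  refine ⟨fun z₁ hz₁ z₂ hz₂ hd => ?_, latticeExtension c u,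
    continuousOn_of_scale hc₀ hρ.le hρ1 hscale, fun z hz => latticeExtension_eq_of_mem hc₀ u hz,
    hholder⟩
  rw [← latticeExtension_eq_of_mem hc₀ u hz₁, ← latticeExtension_eq_of_mem hc₀ u hz₂]
  exact hholder z₁ (latticeInf_subset_Icc hc₀ hz₁) z₂ (latticeInf_subset_Icc hc₀ hz₂) hd

/-- (Dyadic Kolmogorov-type Hölder extension, deterministic) Let `r ≥ 1`,
`c_1,…,c_r ≥ 2`, `α > 0`. There is `N = N(r,c,α)` such that for every
`u : Z^r_∞(c) → ℝ` and integer `n ≥ 0` satisfying: for any `m ≥ n`, `i`, and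
`z₁, z₂ ∈ Z^r_m(c)` with `|z₁^i - z₂^i| ≤ c_i^{-m}` and `z₁^j = z₂^j` for `j ≠ i`,
`|u z₁ - u z₂| ≤ 2^{-mα}` — one has: for all `z₁, z₂ ∈ Z^r_∞(c)` with
`|z₁^i - z₂^i| ≤ c_i^{-n-1}` for all `i`,
`|u z₁ - u z₂| ≤ N maxᵢ |z₁^i - z₂^i|^{α_i}`, `α_i = α ln 2 / ln c_i`; moreover `u`
extends continuously to `[0,1]^r` and the same estimate holds there. -/
theorem stmt_15 (r : ℕ) (hr : 1 ≤ r) (c : Fin r → ℕ) (hc : ∀ i, 2 ≤ c i)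
    (α : ℝ) (hα : 0 < α) :
    ∃ N : ℝ, ∀ (u : (Fin r → ℝ) → ℝ) (n : ℕ),
      (∀ m : ℕ, n ≤ m → ∀ i : Fin r,
        ∀ z₁ ∈ lattice r c m, ∀ z₂ ∈ lattice r c m,
          |z₁ i - z₂ i| ≤ ((c i : ℝ) ^ m)⁻¹ → (∀ j, j ≠ i → z₁ j = z₂ j) →
          |u z₁ - u z₂| ≤ (2 : ℝ) ^ (-(m : ℝ) * α)) →
      (∀ z₁ ∈ latticeInf r c, ∀ z₂ ∈ latticeInf r c,
        (∀ i, |z₁ i - z₂ i| ≤ ((c i : ℝ) ^ (n + 1))⁻¹) →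
        |u z₁ - u z₂| ≤
          N * ⨆ i : Fin r, |z₁ i - z₂ i| ^ (α * Real.log 2 / Real.log (c i))) ∧
      ∃ v : (Fin r → ℝ) → ℝ,
        ContinuousOn v (Set.univ.pi fun _ : Fin r => Set.Icc (0 : ℝ) 1) ∧
        (∀ z ∈ latticeInf r c, v z = u z) ∧
        ∀ z₁ ∈ Set.univ.pi fun _ : Fin r => Set.Icc (0 : ℝ) 1,
        ∀ z₂ ∈ Set.univ.pi fun _ : Fin r => Set.Icc (0 : ℝ) 1,
          (∀ i, |z₁ i - z₂ i| ≤ ((c i : ℝ) ^ (n + 1))⁻¹) →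
          |v z₁ - v z₂| ≤
            N * ⨆ i : Fin r, |z₁ i - z₂ i| ^ (α * Real.log 2 / Real.log (c i)) :=
  stmt_15_general r c hc α hα
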